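/- arXiv:1707.06563 — 4 statements merged into one kernel-verified Lean document; each statement's English description precedes it below -/
import Mathlib

section
/- Let P₁,…,Pₙ ∈ ℝ⁴ be points (homogeneous coordinates of points in ℙ³), let A₁, A₂ ∈ ℝ^{3×4} be camera matrices, and suppose Xᵢ = A₁Pᵢ and Yᵢ = A₂Pᵢ for all i. Let Z ∈ ℝ^{n×9} be the matrix whose i-th row is the Kronecker product Xᵢ ⊗ Yᵢ, and let V ∈ ℝ^{n×10} be the matrix whose i-th row is the degree-2 Veronese embedding of Pᵢ (the vector of all monomials of degree 2 in the four coordinates of Pᵢ). Then rank(Z) ≤ rank(V). -/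
/-!
Each entry `Xᵢⱼ Yᵢₖ = (A₁ Pᵢ)ⱼ (A₂ Pᵢ)ₖ` is the value at `Pᵢ` of a quadratic form, and a quadratic
form on `ℝ⁴` is a linear functional of the Veronese coordinates. Hence `Z = V C` for a fixed
`10 × 9` matrix `C`, and `rank Z ≤ rank V`.
-/

open Matrix

/-- Degree-2 Veronese embedding of a point of ℝ⁴. -/
def veronese (x : Fin 4 → ℝ) : Fin 10 → ℝ :=
  ![x 0 ^ 2, x 0 * x 1, x 0 * x 2, x 0 * x 3, x 1 ^ 2, x 1 * x 2, x 1 * x 3,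
    x 2 ^ 2, x 2 * x 3, x 3 ^ 2]

/-- The coefficients of `x ↦ xᵀ Q x` with respect to the monomials listed in `veronese`. -/
def quadCoeffs {R : Type*} [Add R] (Q : Matrix (Fin 4) (Fin 4) R) : Fin 10 → R :=
  ![Q 0 0, Q 0 1 + Q 1 0, Q 0 2 + Q 2 0, Q 0 3 + Q 3 0, Q 1 1, Q 1 2 + Q 2 1, Q 1 3 + Q 3 1,
    Q 2 2, Q 2 3 + Q 3 2, Q 3 3]

theorem veronese_dotProduct_quadCoeffs (x : Fin 4 → ℝ) (Q : Matrix (Fin 4) (Fin 4) ℝ) :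
    veronese x ⬝ᵥ quadCoeffs Q = x ⬝ᵥ Q *ᵥ x := by
  simp only [dotProduct, mulVec, Fin.sum_univ_succ, Fin.sum_univ_zero, add_zero, veronese,
    quadCoeffs, Fin.isValue, Fin.succ_zero_eq_one, Fin.succ_one_eq_two, Fin.reduceSucc,
    cons_val_zero, cons_val_one, cons_val]
  ring

theorem mulVec_apply_mul_mulVec_apply {m n R : Type*} [Fintype n] [CommSemiring R]
    (A B : Matrix m n R) (x : n → R) (j k : m) :
    (A *ᵥ x) j * (B *ᵥ x) k = x ⬝ᵥ vecMulVec (A j) (B k) *ᵥ x := by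
  rw [vecMulVec_mulVec, op_smul_eq_smul, dotProduct_smul, smul_eq_mul, dotProduct_comm x, mul_comm]
  rfl

theorem rank_Z_le_rank_veronese (n : ℕ) (P : Fin n → Fin 4 → ℝ)
    (A₁ A₂ : Matrix (Fin 3) (Fin 4) ℝ) (X Y : Fin n → Fin 3 → ℝ)
    (hX : ∀ i, X i = A₁.mulVec (P i)) (hY : ∀ i, Y i = A₂.mulVec (P i))
    (Z : Matrix (Fin n) (Fin 3 × Fin 3) ℝ)
    (hZ : ∀ i jk, Z i jk = X i jk.1 * Y i jk.2)
    (V : Matrix (Fin n) (Fin 10) ℝ) (hV : ∀ i, V i = veronese (P i)) :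
    Z.rank ≤ V.rank := by
  let C : Matrix (Fin 10) (Fin 3 × Fin 3) ℝ :=
    of fun t jk => quadCoeffs (vecMulVec (A₁ jk.1) (A₂ jk.2)) t
  have hZ_eq : Z = V * C := by
    ext i ⟨j, k⟩
    rw [hZ, hX, hY, mulVec_apply_mul_mulVec_apply, ← veronese_dotProduct_quadCoeffs, ← hV,
      mul_apply]
    rfl
  rw [hZ_eq]
  exact rank_mul_le_left V C
end

section
/- Let P₁,…,P₈ ∈ ℝ³ be the eight vertices of a combinatorial cube, i.e., eight points such that each of the six quadruples of points corresponding to the faces of a cube (with the standard cube's vertex-facet incidences) is coplanar. Then the 8×10 matrix whose rows are the degree-2 Veronese embeddings of the homogenizations (Pᵢ, 1) ∈ ℝ⁴ has rank at most 7. -/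
/-!
Pairing opposite faces of the cube gives three quadrics `a₀a₁`, `b₀b₁`, `c₀c₁` through the eight
points; if they are linearly independent, the points impose at most seven conditions on the
ten-dimensional space of quadrics. Otherwise restrict a linear relation among them to one face
plane: since linear forms are prime, a relation between two products of linear forms identifies
their factors, and chasing this through the cube produces a plane `l` through all but two of the
points. The quadrics `l * m`, with `m` vanishing at the two remaining points, form a
two-dimensional family, and one product of opposite faces lies outside it unless `l` passes
through seven of the points, in which case the family is already three-dimensional.
-/

open Matrix

/-- Homogenization of a point of ℝ³. -/
def hom3 (p : Fin 3 → ℝ) : Fin 4 → ℝ := ![p 0, p 1, p 2, 1]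

/-- Eight points of ℝ³ form a combinatorial cube: each of the six quadruples
corresponding to the facets of the standard cube is coplanar. -/
def IsCombinatorialCube (P : Fin 8 → Fin 3 → ℝ) : Prop :=
  (Matrix.of ![hom3 (P 0), hom3 (P 1), hom3 (P 2), hom3 (P 3)]).det = 0 ∧
  (Matrix.of ![hom3 (P 4), hom3 (P 5), hom3 (P 6), hom3 (P 7)]).det = 0 ∧
  (Matrix.of ![hom3 (P 0), hom3 (P 3), hom3 (P 4), hom3 (P 7)]).det = 0 ∧
  (Matrix.of ![hom3 (P 1), hom3 (P 2), hom3 (P 5), hom3 (P 6)]).det = 0 ∧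
  (Matrix.of ![hom3 (P 0), hom3 (P 2), hom3 (P 5), hom3 (P 7)]).det = 0 ∧
  (Matrix.of ![hom3 (P 1), hom3 (P 3), hom3 (P 4), hom3 (P 6)]).det = 0

open Module Submodule Finset

section LinearForms

variable {K n : Type*} [Field K] [Fintype n] [DecidableEq n]

theorem mem_span_of_forall_dotProduct_eq_zero {s : Set (n → K)} [Finite s] {p : n → K}
    (h : ∀ x, (∀ l ∈ s, l ⬝ᵥ x = 0) → p ⬝ᵥ x = 0) : p ∈ span K s := by
  have key := mem_span_of_iInf_ker_le_ker (L := fun l : s => dotProductEquiv K n l)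
    (K := dotProductEquiv K n p) fun x hx => by
      simp only [mem_iInf, LinearMap.mem_ker, dotProductEquiv_apply_apply] at hx ⊢
      exact h x fun l hl => hx ⟨l, hl⟩
  rw [← Set.image_eq_range, ← LinearEquiv.coe_toLinearMap, span_image] at key
  simpa [mem_map_equiv] using key

theorem mem_span_or_mem_span_of_mul_dotProduct_eq_zero {s : Set (n → K)} [Finite s]
    {p q : n → K} (h : ∀ x, (∀ l ∈ s, l ⬝ᵥ x = 0) → (p ⬝ᵥ x) * (q ⬝ᵥ x) = 0) :
    p ∈ span K s ∨ q ∈ span K s := by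
  let U : Submodule K (n → K) := ⨅ l : s, LinearMap.ker (dotProductEquiv K n l)
  have hU : ∀ x, x ∈ U ↔ ∀ l ∈ s, l ⬝ᵥ x = 0 := by
    simp [U, dotProduct_comm]
  have hsplit : (U : Set (n → K)) ⊆ LinearMap.ker (dotProductEquiv K n p) ∪
      LinearMap.ker (dotProductEquiv K n q) := fun x hx => by
    simpa using h x ((hU x).1 hx)
  refine (AddSubgroupClass.subset_union.1 hsplit).imp (fun hp => ?_) (fun hq => ?_)
  · exact mem_span_of_forall_dotProduct_eq_zero fun x hx => by simpa using hp ((hU x).2 hx)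
  · exact mem_span_of_forall_dotProduct_eq_zero fun x hx => by simpa using hq ((hU x).2 hx)

theorem eq_zero_or_eq_zero_of_mul_dotProduct_eq_zero {p q : n → K}
    (h : ∀ x, (p ⬝ᵥ x) * (q ⬝ᵥ x) = 0) : p = 0 ∨ q = 0 := by
  simpa using mem_span_or_mem_span_of_mul_dotProduct_eq_zero (s := ∅) fun x _ => h x

theorem mem_span_or_of_pencil_vanishes_on_hyperplane {a a' b b' c : n → K} {α β : K}
    (hβ : β ≠ 0)
    (h : ∀ x, c ⬝ᵥ x = 0 → α * ((a ⬝ᵥ x) * (a' ⬝ᵥ x)) + β * ((b ⬝ᵥ x) * (b' ⬝ᵥ x)) = 0)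
    (ha : a ∈ span K {b, c}) :
    b ∈ span K {c} ∨ a ∈ span K {b} ∨ b' ∈ span K {a'} ∨
      ∀ x, (a ⬝ᵥ x = 0 ∧ b ⬝ᵥ x = 0) ∨ (a' ⬝ᵥ x = 0 ∧ b' ⬝ᵥ x = 0) → c ⬝ᵥ x = 0 := by
  obtain ⟨t, s, rfl⟩ := mem_span_pair.1 ha
  -- on the hyperplane `c = 0` the form `a` is `t • b`, so the quadric factors through `b`
  have hfactor : ∀ x, (∀ l ∈ ({c} : Set (n → K)), l ⬝ᵥ x = 0) →
      (b ⬝ᵥ x) * ((α * t) • a' + β • b') ⬝ᵥ x = 0 := fun x hx => by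
    have hcx : c ⬝ᵥ x = 0 := hx c rfl
    simp only [add_dotProduct, smul_dotProduct, smul_eq_mul] at h ⊢
    linear_combination h x hcx - α * s * (a' ⬝ᵥ x) * hcx
  refine (mem_span_or_mem_span_of_mul_dotProduct_eq_zero hfactor).imp_right fun hG => ?_
  obtain ⟨s', hs'⟩ := mem_span_singleton.1 hG
  rcases eq_or_ne s 0 with rfl | hs
  · exact Or.inl (mem_span_singleton.2 ⟨t, by simp⟩)
  rcases eq_or_ne s' 0 with rfl | hs'0
  · refine Or.inr (Or.inl (mem_span_singleton.2 ⟨-(α * t) / β, ?_⟩))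
    have hb' : β • b' = -((α * t) • a') := by
      rw [zero_smul] at hs'
      exact eq_neg_of_add_eq_zero_right hs'.symm
    rw [div_eq_inv_mul, mul_smul, neg_smul, ← hb', inv_smul_smul₀ hβ]
  refine Or.inr (Or.inr fun x hx => ?_)
  have hG' := congrArg (· ⬝ᵥ x) hs'
  simp only [add_dotProduct, smul_dotProduct, smul_eq_mul] at hx hG' ⊢
  rcases hx with ⟨hax, hbx⟩ | ⟨hax, hbx⟩
  · exact (mul_eq_zero.1 (by linear_combination hax - t * hbx)).resolve_left hs
  · exact (mul_eq_zero.1 (by linear_combination hG' + α * t * hax + β * hbx)).resolve_left hs'0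

end LinearForms

section Quadrics

variable {ι : Type*}

def productQuadric (l : Fin 4 → ℝ) : (Fin 4 → ℝ) →ₗ[ℝ] Fin 10 → ℝ where
  toFun m := ![l 0 * m 0, l 0 * m 1 + l 1 * m 0, l 0 * m 2 + l 2 * m 0, l 0 * m 3 + l 3 * m 0,
    l 1 * m 1, l 1 * m 2 + l 2 * m 1, l 1 * m 3 + l 3 * m 1,
    l 2 * m 2, l 2 * m 3 + l 3 * m 2, l 3 * m 3]
  map_add' m m' := by ext k; fin_cases k <;> simp [mul_add, add_add_add_comm]
  map_smul' t m := by ext k; fin_cases k <;> simp [mul_add, mul_left_comm]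

theorem veronese_dotProduct_productQuadric (x l m : Fin 4 → ℝ) :
    veronese x ⬝ᵥ productQuadric l m = (l ⬝ᵥ x) * (m ⬝ᵥ x) := by
  simp only [dotProduct, veronese, productQuadric, LinearMap.coe_mk, AddHom.coe_mk,
    Fin.sum_univ_succ, cons_val_zero, cons_val_succ, Finset.univ_unique, Fin.default_eq_zero,
    cons_val_fin_one, Finset.sum_singleton, Fin.succ_zero_eq_one, Fin.succ_one_eq_two,
    Fin.reduceSucc]
  ring

theorem productQuadric_injective {l : Fin 4 → ℝ} (hl : l ≠ 0) :
    Function.Injective (productQuadric l) := by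
  refine (injective_iff_map_eq_zero _).2 fun m hm => ?_
  refine (eq_zero_or_eq_zero_of_mul_dotProduct_eq_zero fun x => ?_).resolve_left hl
  rw [← veronese_dotProduct_productQuadric, hm, dotProduct_zero]

def quadricsThrough (w : ι → Fin 4 → ℝ) : Submodule ℝ (Fin 10 → ℝ) :=
  LinearMap.ker (Matrix.of fun i => veronese (w i)).mulVecLin

def planesThrough (w : ι → Fin 4 → ℝ) : Submodule ℝ (Fin 4 → ℝ) :=
  LinearMap.ker (Matrix.of w).mulVecLin

theorem mem_quadricsThrough {w : ι → Fin 4 → ℝ} {q : Fin 10 → ℝ} :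
    q ∈ quadricsThrough w ↔ ∀ i, veronese (w i) ⬝ᵥ q = 0 := by
  simp [quadricsThrough, funext_iff, mulVec]

theorem mem_planesThrough {w : ι → Fin 4 → ℝ} {m : Fin 4 → ℝ} :
    m ∈ planesThrough w ↔ ∀ i, w i ⬝ᵥ m = 0 := by
  simp [planesThrough, funext_iff, mulVec]

theorem rank_add_finrank_quadricsThrough (w : ι → Fin 4 → ℝ) :
    (Matrix.of fun i => veronese (w i)).rank + finrank ℝ (quadricsThrough w) = 10 := by
  rw [Matrix.rank, quadricsThrough, LinearMap.finrank_range_add_finrank_ker, finrank_fin_fun]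

theorem card_sub_le_finrank_planesThrough [Fintype ι] (w : ι → Fin 4 → ℝ) :
    4 - Fintype.card ι ≤ finrank ℝ (planesThrough w) := by
  have h := LinearMap.finrank_range_add_finrank_ker (Matrix.of w).mulVecLin
  rw [finrank_fin_fun] at h
  have := (Matrix.of w).rank_le_card_height
  rw [Matrix.rank] at this
  rw [planesThrough]
  omega

theorem productQuadric_mem_quadricsThrough {w : ι → Fin 4 → ℝ} {l m : Fin 4 → ℝ}
    (h : ∀ i, (l ⬝ᵥ w i) * (m ⬝ᵥ w i) = 0) : productQuadric l m ∈ quadricsThrough w :=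
  mem_quadricsThrough.2 fun i => by rw [veronese_dotProduct_productQuadric, h]

theorem map_productQuadric_planesThrough_le {w : ι → Fin 4 → ℝ} {l : Fin 4 → ℝ}
    {S : Finset ι} (hS : ∀ i ∉ S, l ⬝ᵥ w i = 0) :
    (planesThrough fun i : S => w i).map (productQuadric l) ≤ quadricsThrough w := by
  rintro _ ⟨m, hm, rfl⟩
  refine productQuadric_mem_quadricsThrough fun i => ?_
  by_cases hi : i ∈ S
  · rw [dotProduct_comm m, mem_planesThrough.1 hm ⟨i, hi⟩, mul_zero]
  · rw [hS i hi, zero_mul]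

theorem sub_card_le_finrank_map_productQuadric (w : ι → Fin 4 → ℝ) {l : Fin 4 → ℝ}
    (hl : l ≠ 0) (S : Finset ι) :
    4 - #S ≤ finrank ℝ ((planesThrough fun i : S => w i).map (productQuadric l)) := by
  rw [LinearEquiv.finrank_eq (equivMapOfInjective _ (productQuadric_injective hl) _).symm]
  simpa using card_sub_le_finrank_planesThrough fun i : S => w i

theorem sub_card_le_finrank_quadricsThrough {w : ι → Fin 4 → ℝ} {l : Fin 4 → ℝ} (hl : l ≠ 0)
    {S : Finset ι} (hS : ∀ i ∉ S, l ⬝ᵥ w i = 0) : 4 - #S ≤ finrank ℝ (quadricsThrough w) :=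
  (sub_card_le_finrank_map_productQuadric w hl S).trans
    (finrank_mono (map_productQuadric_planesThrough_le hS))

theorem three_le_finrank_quadricsThrough_of_card_le_two [DecidableEq ι] {w : ι → Fin 4 → ℝ}
    {l r r' : Fin 4 → ℝ} (hl : l ≠ 0) {S : Finset ι} (hS2 : #S ≤ 2)
    (hS : ∀ i ∉ S, l ⬝ᵥ w i = 0) (hr : r ≠ 0) (hr' : r' ≠ 0)
    (hrr' : ∀ i, (r ⬝ᵥ w i) * (r' ⬝ᵥ w i) = 0)
    (hrS : ∃ i ∈ S, r ⬝ᵥ w i = 0) (hr'S : ∃ i ∈ S, r' ⬝ᵥ w i = 0) :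
    3 ≤ finrank ℝ (quadricsThrough w) := by
  have of_mem_span {p : Fin 4 → ℝ} (hp : p ≠ 0) (hpS : ∃ i ∈ S, p ⬝ᵥ w i = 0)
      (hpl : p ∈ span ℝ {l}) : 3 ≤ finrank ℝ (quadricsThrough w) := by
    obtain ⟨i, hi, hpi⟩ := hpS
    obtain ⟨t, rfl⟩ := mem_span_singleton.1 hpl
    have hli : l ⬝ᵥ w i = 0 := by
      simpa [smul_dotProduct, show t ≠ 0 by rintro rfl; simp at hp] using hpi
    have := sub_card_le_finrank_quadricsThrough hl (S := S.erase i) fun j hj => by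
      by_cases hji : j = i
      · rwa [hji]
      · exact hS j fun hjS => hj (mem_erase.2 ⟨hji, hjS⟩)
    have := card_erase_of_mem hi
    omega
  set U := (planesThrough fun i : S => w i).map (productQuadric l)
  by_cases hmem : productQuadric r r' ∈ U
  · obtain ⟨m, -, hm⟩ := hmem
    have hfactor : ∀ x, (∀ l' ∈ ({l} : Set (Fin 4 → ℝ)), l' ⬝ᵥ x = 0) →
        (r ⬝ᵥ x) * (r' ⬝ᵥ x) = 0 := fun x hx => by
      rw [← veronese_dotProduct_productQuadric, ← hm, veronese_dotProduct_productQuadric,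
        hx l rfl, zero_mul]
    exact (mem_span_or_mem_span_of_mul_dotProduct_eq_zero hfactor).elim
      (of_mem_span hr hrS) (of_mem_span hr' hr'S)
  · have hlt : U < quadricsThrough w := SetLike.lt_iff_le_and_exists.2
      ⟨map_productQuadric_planesThrough_le hS, _, productQuadric_mem_quadricsThrough hrr', hmem⟩
    have := finrank_lt_finrank_of_lt hlt
    have : 4 - #S ≤ finrank ℝ U := sub_card_le_finrank_map_productQuadric w hl S
    omega

end Quadrics

/-- The labels of `IsCombinatorialCube` as vertices of `{0,1}³`: its face `(d, e)` consists of
the labels `i` with `cubeVertex i d = e`. -/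
def cubeVertex : Fin 8 → Fin 3 → Fin 2 :=
  ![![0, 0, 0], ![0, 1, 1], ![0, 1, 0], ![0, 0, 1], ![1, 0, 1], ![1, 1, 0], ![1, 1, 1], ![1, 0, 0]]

theorem cubeVertex_injective : Function.Injective cubeVertex := by decide

theorem card_filter_cubeVertex_ne_ne_le_two :
    ∀ {d d' : Fin 3}, d ≠ d' → ∀ e e' : Fin 2,
      #{i | cubeVertex i d ≠ e ∧ cubeVertex i d' ≠ e'} ≤ 2 := by
  decide

theorem card_filter_cubeVertex_off_face_and_edges_le_two :
    ∀ {d d' d'' : Fin 3}, d ≠ d' → d ≠ d'' → d' ≠ d'' → ∀ {e e' : Fin 2}, e ≠ e' →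
      #{i | cubeVertex i d'' ≠ 0 ∧ ¬(cubeVertex i d = e ∧ cubeVertex i d' = 0) ∧
        ¬(cubeVertex i d = e' ∧ cubeVertex i d' = 1)} ≤ 2 := by
  decide

structure IsCubeFacePlanes (w : Fin 8 → Fin 4 → ℝ) (f : Fin 3 → Fin 2 → Fin 4 → ℝ) : Prop where
  ne_zero : ∀ d e, f d e ≠ 0
  dotProduct_eq_zero : ∀ {i d e}, cubeVertex i d = e → f d e ⬝ᵥ w i = 0

namespace IsCubeFacePlanes

variable {w : Fin 8 → Fin 4 → ℝ} {f : Fin 3 → Fin 2 → Fin 4 → ℝ}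

theorem mul_dotProduct_eq_zero (hf : IsCubeFacePlanes w f) (d : Fin 3) {e e' : Fin 2}
    (he : e ≠ e') (i : Fin 8) : (f d e ⬝ᵥ w i) * (f d e' ⬝ᵥ w i) = 0 := by
  rcases (by omega : cubeVertex i d = e ∨ cubeVertex i d = e') with h | h
  · rw [hf.dotProduct_eq_zero h, zero_mul]
  · rw [hf.dotProduct_eq_zero h, mul_zero]

theorem three_le_finrank_of_card_le_two (hf : IsCubeFacePlanes w f) {l : Fin 4 → ℝ}
    (hl : l ≠ 0) {S : Finset (Fin 8)} (hS2 : #S ≤ 2) (hS : ∀ i ∉ S, l ⬝ᵥ w i = 0) :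
    3 ≤ finrank ℝ (quadricsThrough w) := by
  rcases Nat.lt_or_ge #S 2 with hS1 | hS2'
  · have := sub_card_le_finrank_quadricsThrough hl hS
    omega
  obtain ⟨j, k, hjk, rfl⟩ := card_eq_two.1 (le_antisymm hS2 hS2')
  obtain ⟨d, hd⟩ := Function.ne_iff.1 (cubeVertex_injective.ne hjk)
  exact three_le_finrank_quadricsThrough_of_card_le_two hl hS2 hS (hf.ne_zero d _)
    (hf.ne_zero d _) (hf.mul_dotProduct_eq_zero d hd) ⟨j, by simp, hf.dotProduct_eq_zero rfl⟩
    ⟨k, by simp, hf.dotProduct_eq_zero rfl⟩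

theorem three_le_finrank_of_mem_span (hf : IsCubeFacePlanes w f) {d d' : Fin 3} (hd : d ≠ d')
    {e e' : Fin 2} (h : f d e ∈ span ℝ {f d' e'}) : 3 ≤ finrank ℝ (quadricsThrough w) := by
  obtain ⟨t, ht⟩ := mem_span_singleton.1 h
  refine hf.three_le_finrank_of_card_le_two (hf.ne_zero d e)
    (card_filter_cubeVertex_ne_ne_le_two hd e e') fun i hi => ?_
  by_cases hid : cubeVertex i d = e
  · exact hf.dotProduct_eq_zero hid
  · have hid' : cubeVertex i d' = e' := by simpa [hid] using hi
    rw [← ht, smul_dotProduct, hf.dotProduct_eq_zero hid', smul_zero]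

theorem three_le_finrank_of_vanishing_on_edges (hf : IsCubeFacePlanes w f)
    {d d' d'' : Fin 3} (hd : d ≠ d') (hd' : d ≠ d'') (hd'' : d' ≠ d'') {e e' : Fin 2}
    (he : e ≠ e') (h : ∀ x, (f d e ⬝ᵥ x = 0 ∧ f d' 0 ⬝ᵥ x = 0) ∨
      (f d e' ⬝ᵥ x = 0 ∧ f d' 1 ⬝ᵥ x = 0) → f d'' 0 ⬝ᵥ x = 0) :
    3 ≤ finrank ℝ (quadricsThrough w) := by
  refine hf.three_le_finrank_of_card_le_two (hf.ne_zero d'' 0)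
    (card_filter_cubeVertex_off_face_and_edges_le_two hd hd' hd'' he) fun i hi => ?_
  by_cases h0 : cubeVertex i d'' = 0
  · exact hf.dotProduct_eq_zero h0
  refine h _ ?_
  by_cases h1 : cubeVertex i d = e ∧ cubeVertex i d' = 0
  · exact Or.inl ⟨hf.dotProduct_eq_zero h1.1, hf.dotProduct_eq_zero h1.2⟩
  · have h2 : cubeVertex i d = e' ∧ cubeVertex i d' = 1 := by
      by_contra h2
      exact hi (mem_filter.2 ⟨mem_univ _, h0, h1, h2⟩)
    exact Or.inr ⟨hf.dotProduct_eq_zero h2.1, hf.dotProduct_eq_zero h2.2⟩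

theorem three_le_finrank_of_relation (hf : IsCubeFacePlanes w f) {d d' d'' : Fin 3}
    (hd : d ≠ d') (hd' : d ≠ d'') (hd'' : d' ≠ d'') {α β γ : ℝ} (hα : α ≠ 0) (hβ : β ≠ 0)
    (h : ∀ x, α * ((f d 0 ⬝ᵥ x) * (f d 1 ⬝ᵥ x)) + β * ((f d' 0 ⬝ᵥ x) * (f d' 1 ⬝ᵥ x)) +
      γ * ((f d'' 0 ⬝ᵥ x) * (f d'' 1 ⬝ᵥ x)) = 0) :
    3 ≤ finrank ℝ (quadricsThrough w) := by
  by_cases hb : f d' 0 ∈ span ℝ {f d'' 0}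
  · exact hf.three_le_finrank_of_mem_span hd'' hb
  have of_mem_span {e e' : Fin 2} (he : e ≠ e') (hrel : ∀ x, f d'' 0 ⬝ᵥ x = 0 →
      α * ((f d e ⬝ᵥ x) * (f d e' ⬝ᵥ x)) + β * ((f d' 0 ⬝ᵥ x) * (f d' 1 ⬝ᵥ x)) = 0)
      (ha : f d e ∈ span ℝ {f d' 0, f d'' 0}) : 3 ≤ finrank ℝ (quadricsThrough w) := by
    rcases mem_span_or_of_pencil_vanishes_on_hyperplane hβ hrel ha with
      hb' | ha' | hb'' | hedges
    · exact absurd hb' hb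
    · exact hf.three_le_finrank_of_mem_span hd ha'
    · exact hf.three_le_finrank_of_mem_span hd.symm hb''
    · exact hf.three_le_finrank_of_vanishing_on_edges hd hd' hd'' he hedges
  have hrel : ∀ x, f d'' 0 ⬝ᵥ x = 0 →
      α * ((f d 0 ⬝ᵥ x) * (f d 1 ⬝ᵥ x)) + β * ((f d' 0 ⬝ᵥ x) * (f d' 1 ⬝ᵥ x)) = 0 :=
    fun x hx => by simpa [hx] using h x
  have hsplit : f d 0 ∈ span ℝ {f d' 0, f d'' 0} ∨ f d 1 ∈ span ℝ {f d' 0, f d'' 0} :=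
    mem_span_or_mem_span_of_mul_dotProduct_eq_zero fun x hx => by
      simpa [hα, hx (f d' 0) (by simp)] using hrel x (hx _ (by simp))
  rcases hsplit with h0 | h1
  · exact of_mem_span (e := 0) (e' := 1) (by decide) hrel h0
  · exact of_mem_span (e := 1) (e' := 0) (by decide)
      (fun x hx => by linear_combination hrel x hx) h1

theorem three_le_finrank_quadricsThrough (hf : IsCubeFacePlanes w f) :
    3 ≤ finrank ℝ (quadricsThrough w) := by
  set Q : Fin 3 → Fin 10 → ℝ := fun d => productQuadric (f d 0) (f d 1)
  by_cases hQ : LinearIndependent ℝ Q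
  · calc 3 = finrank ℝ (span ℝ (Set.range Q)) := by simp [finrank_span_eq_card hQ]
      _ ≤ _ := finrank_mono <| span_le.2 <| Set.range_subset_iff.2 fun d =>
          productQuadric_mem_quadricsThrough (hf.mul_dotProduct_eq_zero d (by decide))
  obtain ⟨g, hg, d₀, hd₀⟩ := Fintype.not_linearIndependent_iff.1 hQ
  have hrel : ∀ x, g 0 * ((f 0 0 ⬝ᵥ x) * (f 0 1 ⬝ᵥ x)) + g 1 * ((f 1 0 ⬝ᵥ x) * (f 1 1 ⬝ᵥ x)) +
      g 2 * ((f 2 0 ⬝ᵥ x) * (f 2 1 ⬝ᵥ x)) = 0 := fun x => by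
    simpa [Q, Fin.sum_univ_three, dotProduct_add, veronese_dotProduct_productQuadric]
      using congrArg (veronese x ⬝ᵥ ·) hg
  have single (d : Fin 3) (h : ∀ x, g d * ((f d 0 ⬝ᵥ x) * (f d 1 ⬝ᵥ x)) = 0) : g d = 0 := by
    by_contra hgd
    rcases eq_zero_or_eq_zero_of_mul_dotProduct_eq_zero fun x =>
      (mul_eq_zero.1 (h x)).resolve_left hgd with h0 | h1
    exacts [hf.ne_zero d 0 h0, hf.ne_zero d 1 h1]
  rcases eq_or_ne (g 0) 0 with h0 | h0 <;> rcases eq_or_ne (g 1) 0 with h1 | h1 <;>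
    rcases eq_or_ne (g 2) 0 with h2 | h2
  · fin_cases d₀ <;> contradiction
  · exact absurd (single 2 fun x => by simpa [h0, h1] using hrel x) h2
  · exact absurd (single 1 fun x => by simpa [h0, h2] using hrel x) h1
  · exact hf.three_le_finrank_of_relation (d := 1) (d' := 2) (d'' := 0) (γ := g 0)
      (by decide) (by decide) (by decide) h1 h2 fun x => by linear_combination hrel x
  · exact absurd (single 0 fun x => by simpa [h1, h2] using hrel x) h0
  · exact hf.three_le_finrank_of_relation (d := 0) (d' := 2) (d'' := 1) (γ := g 1)
      (by decide) (by decide) (by decide) h0 h2 fun x => by linear_combination hrel x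
  all_goals
    exact hf.three_le_finrank_of_relation (d := 0) (d' := 1) (d'' := 2) (by decide) (by decide)
      (by decide) h0 h1 hrel

end IsCubeFacePlanes

theorem exists_isCubeFacePlanes {P : Fin 8 → Fin 3 → ℝ} (hP : IsCombinatorialCube P) :
    ∃ f, IsCubeFacePlanes (fun i => hom3 (P i)) f := by
  have face (x : Fin 4 → Fin 4 → ℝ) (hx : (Matrix.of x).det = 0) :
      ∃ l ≠ 0, ∀ j, l ⬝ᵥ x j = 0 := by
    obtain ⟨l, hl, hxl⟩ := exists_mulVec_eq_zero_iff.2 hx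
    exact ⟨l, hl, fun j => by simpa [mulVec, dotProduct_comm] using congrFun hxl j⟩
  obtain ⟨hA0, hA1, hB0, hB1, hC0, hC1⟩ := hP
  obtain ⟨a0, ha0, za0⟩ := face _ hA0
  obtain ⟨a1, ha1, za1⟩ := face _ hA1
  obtain ⟨b0, hb0, zb0⟩ := face _ hB0
  obtain ⟨b1, hb1, zb1⟩ := face _ hB1
  obtain ⟨c0, hc0, zc0⟩ := face _ hC0
  obtain ⟨c1, hc1, zc1⟩ := face _ hC1
  simp only [Fin.forall_fin_succ] at za0 za1 zb0 zb1 zc0 zc1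
  refine ⟨![![a0, a1], ![b0, b1], ![c0, c1]], fun d e => ?_, ?_⟩
  · fin_cases d <;> fin_cases e <;> assumption
  · rintro i d e rfl
    fin_cases i <;> fin_cases d <;> simp_all [cubeVertex]

theorem veronese_rank_le_seven_of_combinatorial_cube
    (P : Fin 8 → Fin 3 → ℝ) (hP : IsCombinatorialCube P)
    (V : Matrix (Fin 8) (Fin 10) ℝ) (hV : ∀ i, V i = veronese (hom3 (P i))) :
    V.rank ≤ 7 := by
  obtain ⟨f, hf⟩ := exists_isCubeFacePlanes hP
  have hrank := rank_add_finrank_quadricsThrough fun i => hom3 (P i)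
  rw [← show V = Matrix.of fun i => veronese (hom3 (P i)) from funext hV] at hrank
  have := hf.three_le_finrank_quadricsThrough
  omega
end

section
/- Let P₁,…,P₈ ∈ ℝ³ be the vertices of a combinatorial cube (eight points with the vertex-facet incidences of a cube, each face coplanar). Then for any two additional points f₁, f₂ ∈ ℝ³, there exists a nonzero symmetric matrix Q ∈ ℝ^{4×4} such that the quadric {p ∈ ℝ³ : (p,1)ᵀ Q (p,1) = 0} passes through all ten points P₁,…,P₈, f₁, f₂. -/
open Matrix

/-!
Each pair of opposite facets `a, a'` of the cube gives the reducible quadric `a a'` through all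
eight vertices. If the three such quadrics are linearly independent, the quadrics through the
vertices form a space of dimension at least `3`, and each further point cuts the dimension by at
most one. Otherwise, say, `c c'` vanishes wherever `a a'` and `b b'` vanish, so each of the four
edge lines `a = b = 0`, `a = b' = 0`, `a' = b = 0`, `a' = b' = 0` lies in the plane `c = 0` or in
the plane `c' = 0`. Hence there are at most four vertices off the plane `c = 0` or off the plane
`c' = 0`, counted together, and the quadrics `c p`, `c' r`, with `p` vanishing at the vertices
off `c = 0` and `r` at those off `c' = 0`, again form a space of dimension at least `3`. (If `c`
and `c'` are proportional, `c` vanishes at every vertex and the quadrics `c p` suffice.)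
-/

open Module Finset

namespace CubeQuadric

variable {K : Type*} [Field K] {n : Type*}

def symProd : (n → K) →ₗ[K] (n → K) →ₗ[K] Matrix n n K :=
  vecMulVecBilin K K + (vecMulVecBilin K K).flip

theorem symProd_apply (x y : n → K) : symProd x y = vecMulVec x y + vecMulVec y x := rfl

theorem symProd_isSymm (x y : n → K) : (symProd x y).IsSymm := by
  simp [symProd_apply, Matrix.IsSymm, transpose_vecMulVec, add_comm]

variable [Fintype n]

def hyperplane (x : n → K) : Submodule K (n → K) := LinearMap.ker (dotProductBilin K K x)

@[simp]
theorem mem_hyperplane {x v : n → K} : v ∈ hyperplane x ↔ x ⬝ᵥ v = 0 := Iff.rfl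

theorem le_hyperplane_or_le_hyperplane {L : Submodule K (n → K)} {x y : n → K}
    (h : ∀ v ∈ L, (x ⬝ᵥ v) * (y ⬝ᵥ v) = 0) : L ≤ hyperplane x ∨ L ≤ hyperplane y :=
  AddSubgroupClass.subset_union.mp fun v hv => mul_eq_zero.mp (h v hv)

theorem eq_zero_or_eq_zero_of_dotProduct_mul_dotProduct {x y : n → K}
    (h : ∀ v, (x ⬝ᵥ v) * (y ⬝ᵥ v) = 0) : x = 0 ∨ y = 0 := by
  refine (le_hyperplane_or_le_hyperplane (L := ⊤) fun v _ => h v).imp ?_ ?_ <;>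
    exact fun hle => dotProduct_eq_zero _ fun v => hle Submodule.mem_top

theorem exists_eq_smul_of_hyperplane_le [DecidableEq n] {x z : n → K}
    (h : hyperplane x ≤ hyperplane z) : ∃ t : K, z = t • x := by
  have hz := mem_span_of_iInf_ker_le_ker (ι := Unit) (L := fun _ => dotProductEquiv K n x)
    (K := dotProductEquiv K n z) (by simpa [SetLike.le_def] using h)
  obtain ⟨t, ht⟩ := Submodule.mem_span_singleton.mp (by simpa using hz)
  exact ⟨t, (dotProductEquiv K n).injective (by rw [map_smul, ht])⟩

theorem card_le_finrank_iInf_hyperplane_add_card {ι : Type*} [Fintype ι] (w : ι → n → K) :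
    Fintype.card n ≤ finrank K ↥(⨅ i, hyperplane (w i)) + Fintype.card ι := by
  let f : (n → K) →ₗ[K] ι → K := LinearMap.pi fun i => dotProductBilin K K (w i)
  have hker : LinearMap.ker f = ⨅ i, hyperplane (w i) := LinearMap.ker_pi _
  have hrange : finrank K (LinearMap.range f) ≤ Fintype.card ι :=
    (Submodule.finrank_le _).trans (finrank_fintype_fun_eq_card K).le
  have := f.finrank_range_add_finrank_ker
  rw [hker, finrank_fintype_fun_eq_card] at this
  omega

theorem dotProduct_symProd_mulVec (x y v : n → K) :
    v ⬝ᵥ symProd x y *ᵥ v = 2 * ((x ⬝ᵥ v) * (y ⬝ᵥ v)) := by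
  simp only [symProd_apply, add_mulVec, vecMulVec_mulVec, op_smul_eq_smul, dotProduct_add,
    dotProduct_smul, smul_eq_mul, dotProduct_comm v x, dotProduct_comm v y]
  ring

def evalQuadratic (v : n → K) : Matrix n n K →ₗ[K] K where
  toFun Q := v ⬝ᵥ Q *ᵥ v
  map_add' P Q := by simp [add_mulVec]
  map_smul' t Q := by simp [smul_mulVec]

def quadricsThrough (S : Set (n → K)) : Submodule K (Matrix n n K) where
  carrier := {Q | Q.IsSymm ∧ ∀ v ∈ S, v ⬝ᵥ Q *ᵥ v = 0}
  add_mem' hP hQ := ⟨hP.1.add hQ.1, fun v hv => by simp [add_mulVec, hP.2 v hv, hQ.2 v hv]⟩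
  zero_mem' := ⟨isSymm_zero, fun v _ => by simp⟩
  smul_mem' t Q hQ := ⟨hQ.1.smul t, fun v hv => by simp [smul_mulVec, hQ.2 v hv]⟩

theorem symProd_mem_quadricsThrough {S : Set (n → K)} {x y : n → K}
    (h : ∀ v ∈ S, (x ⬝ᵥ v) * (y ⬝ᵥ v) = 0) : symProd x y ∈ quadricsThrough S :=
  ⟨symProd_isSymm x y, fun v hv => by rw [dotProduct_symProd_mulVec, h v hv, mul_zero]⟩

theorem finrank_quadricsThrough_le_insert (S : Set (n → K)) (v : n → K) :
    finrank K (quadricsThrough S) ≤ finrank K (quadricsThrough (insert v S)) + 1 := by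
  let f := (evalQuadratic v).domRestrict (quadricsThrough S)
  have hker :
      (LinearMap.ker f).map (quadricsThrough S).subtype ≤ quadricsThrough (insert v S) := by
    rintro _ ⟨Q, hQ, rfl⟩
    exact ⟨Q.2.1, Set.forall_mem_insert.mpr ⟨hQ, Q.2.2⟩⟩
  have hrange : finrank K (LinearMap.range f) ≤ 1 :=
    (Submodule.finrank_le _).trans (Module.finrank_self K).le
  have := f.finrank_range_add_finrank_ker
  have := Submodule.finrank_mono hker
  rw [Submodule.finrank_map_subtype_eq] at this
  omega

theorem symProd_injective [NeZero (2 : K)] {x : n → K} (hx : x ≠ 0) :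
    Function.Injective (symProd x) := by
  refine (injective_iff_map_eq_zero _).mpr fun y hy => ?_
  refine (eq_zero_or_eq_zero_of_dotProduct_mul_dotProduct fun v => ?_).resolve_left hx
  simpa [evalQuadratic, dotProduct_symProd_mulVec, two_ne_zero] using congrArg (evalQuadratic v) hy

/-- Unique factorization of products of two linear forms. -/
theorem symProd_mem_span_of_symProd_eq [NeZero (2 : K)] [DecidableEq n] {x y p r : n → K}
    (hx : x ≠ 0) (hxy : ∀ t : K, y ≠ t • x) (h : symProd x p = symProd y r) :
    symProd x p ∈ K ∙ symProd x y := by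
  have hform (v : n → K) : (x ⬝ᵥ v) * (p ⬝ᵥ v) = (y ⬝ᵥ v) * (r ⬝ᵥ v) := by
    simpa [evalQuadratic, dotProduct_symProd_mulVec, two_ne_zero] using
      congrArg (evalQuadratic v) h
  obtain ⟨t, rfl⟩ : ∃ t : K, r = t • x := by
    have hle : hyperplane x ≤ hyperplane y ∨ hyperplane x ≤ hyperplane r :=
      le_hyperplane_or_le_hyperplane fun v hv => by rw [← hform, mem_hyperplane.mp hv, zero_mul]
    refine exists_eq_smul_of_hyperplane_le (hle.resolve_left fun hle' => ?_)
    obtain ⟨t, rfl⟩ := exists_eq_smul_of_hyperplane_le hle'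
    exact hxy t rfl
  have hp : p = t • y := by
    refine sub_eq_zero.mp <|
      (eq_zero_or_eq_zero_of_dotProduct_mul_dotProduct fun v => ?_).resolve_left hx
    rw [sub_dotProduct, mul_sub, hform, smul_dotProduct, smul_dotProduct, smul_eq_mul,
      smul_eq_mul]
    ring
  rw [hp, map_smul]
  exact Submodule.smul_mem _ t (Submodule.mem_span_singleton_self _)

theorem card_le_finrank_quadricsThrough [NeZero (2 : K)] {S : Set (n → K)} {x : n → K}
    (hx : x ≠ 0) (hS : ∀ v ∈ S, x ⬝ᵥ v = 0) : Fintype.card n ≤ finrank K (quadricsThrough S) := by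
  have hmem (y : n → K) : symProd x y ∈ quadricsThrough S :=
    symProd_mem_quadricsThrough fun v hv => by rw [hS v hv, zero_mul]
  calc Fintype.card n = finrank K (n → K) := (finrank_fintype_fun_eq_card K).symm
    _ ≤ finrank K (quadricsThrough S) :=
      LinearMap.finrank_le_finrank_of_injective (f := (symProd x).codRestrict _ hmem)
        fun y z h => symProd_injective hx (congrArg Subtype.val h)

section Products

variable {ι : Type*} (u : ι → n → K) (S : Finset ι)

theorem map_symProd_iInf_hyperplane_le {x : n → K} (hxS : ∀ i ∉ S, x ⬝ᵥ u i = 0) :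
    (⨅ i : S, hyperplane (u i)).map (symProd x) ≤ quadricsThrough (Set.range u) := by
  rintro _ ⟨p, hp, rfl⟩
  refine symProd_mem_quadricsThrough ?_
  rintro _ ⟨i, rfl⟩
  by_cases hi : i ∈ S
  · rw [dotProduct_comm p, mem_hyperplane.mp ((Submodule.mem_iInf _).mp hp ⟨i, hi⟩), mul_zero]
  · rw [hxS i hi, zero_mul]

theorem card_le_finrank_map_symProd_iInf_hyperplane_add_card [NeZero (2 : K)] {x : n → K}
    (hx : x ≠ 0) :
    Fintype.card n ≤ finrank K ((⨅ i : S, hyperplane (u i)).map (symProd x)) + #S := by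
  rw [← (Submodule.equivMapOfInjective _ (symProd_injective hx) _).finrank_eq]
  simpa using card_le_finrank_iInf_hyperplane_add_card fun i : S => u i

/-- The two families of products `x p` and `y r` meet only in the line through `x y`. -/
theorem two_mul_card_le_finrank_quadricsThrough [NeZero (2 : K)] [DecidableEq n] (T : Finset ι)
    {x y : n → K} (hx : x ≠ 0) (hxy : ∀ t : K, y ≠ t • x)
    (hxS : ∀ i ∉ S, x ⬝ᵥ u i = 0) (hyT : ∀ i ∉ T, y ⬝ᵥ u i = 0) :
    2 * Fintype.card n ≤ finrank K (quadricsThrough (Set.range u)) + #S + #T + 1 := by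
  have hy : y ≠ 0 := by simpa using hxy 0
  set A := (⨅ i : S, hyperplane (u i)).map (symProd x)
  set B := (⨅ i : T, hyperplane (u i)).map (symProd y)
  have hA : Fintype.card n ≤ finrank K A + #S :=
    card_le_finrank_map_symProd_iInf_hyperplane_add_card u S hx
  have hB : Fintype.card n ≤ finrank K B + #T :=
    card_le_finrank_map_symProd_iInf_hyperplane_add_card u T hy
  have hinf : finrank K ↥(A ⊓ B) ≤ 1 := by
    refine (Submodule.finrank_mono (t := K ∙ symProd x y) ?_).trans
      ((finrank_span_le_card _).trans (by simp))
    rintro _ ⟨⟨p, -, rfl⟩, ⟨r, -, hr⟩⟩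
    exact symProd_mem_span_of_symProd_eq hx hxy hr.symm
  have hsup : finrank K ↥(A ⊔ B) ≤ finrank K (quadricsThrough (Set.range u)) :=
    Submodule.finrank_mono <|
      sup_le (map_symProd_iInf_hyperplane_le u S hxS) (map_symProd_iInf_hyperplane_le u T hyT)
  have := Submodule.finrank_sup_add_finrank_inf_eq A B
  omega

end Products

section Cube

variable {ι : Type*} {c : ι → Fin 3 → Bool} {u : ι → n → K} {φ : Fin 3 → Bool → n → K}

theorem symProd_facetPair_mem_quadricsThrough (hφu : ∀ k i, φ k (c i k) ⬝ᵥ u i = 0)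
    (k : Fin 3) : symProd (φ k false) (φ k true) ∈ quadricsThrough (Set.range u) := by
  refine symProd_mem_quadricsThrough ?_
  rintro _ ⟨i, rfl⟩
  have := hφu k i
  cases h : c i k <;> simp_all

theorem card_filter_coord_eq_le_four [Fintype ι] (hc : Function.Injective c)
    (s : Bool → Bool → Bool) :
    #{i | c i 2 = s (c i 0) (c i 1)} ≤ 4 := by
  refine (card_le_card_of_injOn (t := (univ : Finset (Bool × Bool))) (fun i => (c i 0, c i 1))
    (fun _ _ => mem_univ _) fun i hi j hj hij => hc ?_).trans_eq rfl
  simp only [coe_filter, mem_univ, true_and, Set.mem_ofPred_eq, Prod.mk.injEq] at hi hj hij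
  funext k
  fin_cases k
  exacts [hij.1, hij.2, by simp [hi, hj, hij.1, hij.2]]

theorem three_le_finrank_quadricsThrough_of_mul_eq_zero [NeZero (2 : K)] [DecidableEq n]
    [Fintype ι] (hc : Function.Injective c) (hn : 4 ≤ Fintype.card n) (hφ : ∀ k e, φ k e ≠ 0)
    (hφu : ∀ k i, φ k (c i k) ⬝ᵥ u i = 0)
    (hrel : ∀ v, (∀ k ≠ 2, (φ k false ⬝ᵥ v) * (φ k true ⬝ᵥ v) = 0) →
      (φ 2 false ⬝ᵥ v) * (φ 2 true ⬝ᵥ v) = 0) :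
    3 ≤ finrank K (quadricsThrough (Set.range u)) := by
  have hedge (e₀ e₁ : Bool) :
      ∃ s, hyperplane (φ 0 e₀) ⊓ hyperplane (φ 1 e₁) ≤ hyperplane (φ 2 s) := by
    refine (le_hyperplane_or_le_hyperplane fun v hv => hrel v fun k hk => ?_).elim
      (⟨false, ·⟩) (⟨true, ·⟩)
    obtain ⟨h₀, h₁⟩ := Submodule.mem_inf.mp hv
    fin_cases k
    · cases e₀ <;> simp_all
    · cases e₁ <;> simp_all
    · exact absurd rfl hk
  choose s hs using hedge
  have hsu (i : ι) : φ 2 (s (c i 0) (c i 1)) ⬝ᵥ u i = 0 :=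
    hs _ _ (Submodule.mem_inf.mpr ⟨hφu 0 i, hφu 1 i⟩)
  by_cases hprop : ∃ t : K, φ 2 true = t • φ 2 false
  · obtain ⟨t, ht⟩ := hprop
    have ht0 : t ≠ 0 := by rintro rfl; exact hφ 2 true (by simpa using ht)
    have hall : ∀ v ∈ Set.range u, φ 2 false ⬝ᵥ v = 0 := by
      rintro _ ⟨i, rfl⟩
      have := hφu 2 i
      cases h : c i 2 <;> simp_all [smul_dotProduct]
    have := card_le_finrank_quadricsThrough (hφ 2 false) hall
    omega
  · push Not at hprop
    -- off `N`, the two forms `φ 2 (c i 2)` and `φ 2 (s (c i 0) (c i 1))` vanishing at `u i` differ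
    let N : Finset ι := {i | c i 2 = s (c i 0) (c i 1)}
    have hN : #N ≤ 4 := card_filter_coord_eq_le_four hc s
    have hsplit := card_filter_add_card_filter_not (s := N) fun i => c i 2 = true
    have := two_mul_card_le_finrank_quadricsThrough u (N.filter fun i => c i 2 = true)
      (N.filter fun i => ¬c i 2 = true) (hφ 2 false) hprop ?_ ?_
    · omega
    all_goals
      intro i hi
      have h₂ := hφu 2 i
      have hs₂ := hsu i
      simp only [N, mem_filter, mem_univ, true_and] at hi
      cases h : c i 2 <;> cases h' : s (c i 0) (c i 1) <;> simp_all

theorem three_le_finrank_quadricsThrough_cube [NeZero (2 : K)] [DecidableEq n] [Fintype ι]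
    (hc : Function.Injective c) (hn : 4 ≤ Fintype.card n) (hφ : ∀ k e, φ k e ≠ 0)
    (hφu : ∀ k i, φ k (c i k) ⬝ᵥ u i = 0) :
    3 ≤ finrank K (quadricsThrough (Set.range u)) := by
  let pair (k : Fin 3) := symProd (φ k false) (φ k true)
  by_cases hli : LinearIndependent K pair
  · calc 3 = finrank K (Submodule.span K (Set.range pair)) := by
          rw [finrank_span_eq_card hli, Fintype.card_fin]
      _ ≤ _ := Submodule.finrank_mono <| Submodule.span_le.mpr <| by
          rintro _ ⟨k, rfl⟩
          exact symProd_facetPair_mem_quadricsThrough hφu k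
  obtain ⟨g, hg, m, hm⟩ := Fintype.not_linearIndependent_iff.mp hli
  have hrel (v : n → K) (hv : ∀ k ≠ m, (φ k false ⬝ᵥ v) * (φ k true ⬝ᵥ v) = 0) :
      (φ m false ⬝ᵥ v) * (φ m true ⬝ᵥ v) = 0 := by
    have := congrArg (evalQuadratic v) hg
    simp only [map_sum, map_smul, map_zero, evalQuadratic, LinearMap.coe_mk, AddHom.coe_mk,
      pair, dotProduct_symProd_mulVec, smul_eq_mul] at this
    rw [Finset.sum_eq_single m (fun k _ hk => by rw [hv k hk, mul_zero, mul_zero]) (by simp)]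
      at this
    simpa [hm, two_ne_zero] using this
  let σ := Equiv.swap m 2
  refine three_le_finrank_quadricsThrough_of_mul_eq_zero
    (c := fun i k => c i (σ k)) (φ := fun k => φ (σ k)) (σ.surjective.injective_comp_right.comp hc)
    hn (fun _ _ => hφ _ _) (fun k i => hφu _ i)
    fun v hv => ?_
  refine (Equiv.swap_apply_right m 2).symm ▸ hrel v fun k hk => ?_
  simpa [σ] using hv (σ k) (by simpa [σ, Equiv.swap_apply_eq_iff] using hk)

end Cube

theorem exists_ne_zero_dotProduct_eq_zero_of_det_eq_zero [DecidableEq n] {w : n → n → K}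
    (h : (Matrix.of w).det = 0) : ∃ x ≠ 0, ∀ j, x ⬝ᵥ w j = 0 := by
  obtain ⟨x, hx, hwx⟩ := Matrix.exists_mulVec_eq_zero_iff.mpr h
  exact ⟨x, hx, fun j => by rw [dotProduct_comm]; exact congrFun hwx j⟩

/-- Coordinate `k` of vertex `i` records which of the two opposite facets of `IsCombinatorialCube`
in direction `k` contains `P i`. -/
def cubeCoord : Fin 8 → Fin 3 → Bool :=
  ![![false, false, false], ![false, true, true], ![false, true, false], ![false, false, true],
    ![true, false, true], ![true, true, false], ![true, true, true], ![true, false, false]]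

def cubeFacet : Fin 3 → Bool → Fin 4 → Fin 8
  | 0, false => ![0, 1, 2, 3]
  | 0, true => ![4, 5, 6, 7]
  | 1, false => ![0, 3, 4, 7]
  | 1, true => ![1, 2, 5, 6]
  | 2, false => ![0, 2, 5, 7]
  | 2, true => ![1, 3, 4, 6]

theorem cubeCoord_injective : Function.Injective cubeCoord := by decide

theorem exists_cubeFacet_cubeCoord_eq (k : Fin 3) (i : Fin 8) :
    ∃ j, cubeFacet k (cubeCoord i k) j = i := by
  revert k i
  decide

theorem det_cubeFacet_eq_zero {P : Fin 8 → Fin 3 → ℝ} (hP : IsCombinatorialCube P)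
    (k : Fin 3) (e : Bool) : (Matrix.of fun j => hom3 (P (cubeFacet k e j))).det = 0 := by
  have hof (a b c d : Fin 8) : Matrix.of (fun j => hom3 (P (![a, b, c, d] j))) =
      Matrix.of ![hom3 (P a), hom3 (P b), hom3 (P c), hom3 (P d)] := by
    ext j : 1
    fin_cases j <;> rfl
  obtain ⟨h₀, h₁, h₂, h₃, h₄, h₅⟩ := hP
  fin_cases k <;> cases e
  exacts [(hof ..).symm ▸ h₀, (hof ..).symm ▸ h₁, (hof ..).symm ▸ h₂, (hof ..).symm ▸ h₃,
    (hof ..).symm ▸ h₄, (hof ..).symm ▸ h₅]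

theorem exists_facet_forms_of_isCombinatorialCube {P : Fin 8 → Fin 3 → ℝ}
    (hP : IsCombinatorialCube P) : ∃ φ : Fin 3 → Bool → Fin 4 → ℝ,
      (∀ k e, φ k e ≠ 0) ∧ ∀ k i, φ k (cubeCoord i k) ⬝ᵥ hom3 (P i) = 0 := by
  choose φ hφ hφP using fun k e =>
    exists_ne_zero_dotProduct_eq_zero_of_det_eq_zero (det_cubeFacet_eq_zero hP k e)
  refine ⟨φ, hφ, fun k i => ?_⟩
  obtain ⟨j, hj⟩ := exists_cubeFacet_cubeCoord_eq k i
  simpa [hj] using hφP k (cubeCoord i k) j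

end CubeQuadric

open CubeQuadric in
theorem quadric_through_cube_and_two_points
    (P : Fin 8 → Fin 3 → ℝ) (hP : IsCombinatorialCube P) (f₁ f₂ : Fin 3 → ℝ) :
    ∃ Q : Matrix (Fin 4) (Fin 4) ℝ, Q ≠ 0 ∧ Qᵀ = Q ∧
      (∀ i : Fin 8, hom3 (P i) ⬝ᵥ Q.mulVec (hom3 (P i)) = 0) ∧
      hom3 f₁ ⬝ᵥ Q.mulVec (hom3 f₁) = 0 ∧
      hom3 f₂ ⬝ᵥ Q.mulVec (hom3 f₂) = 0 := by
  obtain ⟨φ, hφ, hφP⟩ := exists_facet_forms_of_isCombinatorialCube hP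
  set S := Set.range fun i => hom3 (P i)
  have h₀ : 3 ≤ finrank ℝ (quadricsThrough S) :=
    three_le_finrank_quadricsThrough_cube cubeCoord_injective (by simp) hφ hφP
  have h₁ := finrank_quadricsThrough_le_insert S (hom3 f₁)
  have h₂ := finrank_quadricsThrough_le_insert (insert (hom3 f₁) S) (hom3 f₂)
  have h₃ : 1 ≤ finrank ℝ (quadricsThrough (insert (hom3 f₂) (insert (hom3 f₁) S))) := by omega
  obtain ⟨Q, hQ, hQ0⟩ :=
    Submodule.exists_mem_ne_zero_of_ne_bot (Submodule.one_le_finrank_iff.mp h₃)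
  exact ⟨Q, hQ0, hQ.1, fun i => hQ.2 _ (.inr (.inr ⟨i, rfl⟩)), hQ.2 _ (.inr (.inl rfl)),
    hQ.2 _ (.inl rfl)⟩
end

section
/- Let P₁,…,P₈ ∈ ℝ³ be the vertices of a combinatorial cube and A₁, A₂ ∈ ℝ^{3×4} arbitrary cameras. Let Z ∈ ℝ^{8×9} be the matrix whose i-th row is (A₁(Pᵢ,1)) ⊗ (A₂(Pᵢ,1)). Then rank(Z) ≤ 7; in particular the kernel of Z has dimension at least 2, so Z does not determine the fundamental matrix uniquely up to scale. -/
open Matrix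

open Matrix

/-!
Write `xᵢ = (Pᵢ, 1)`. Every row of `Z` is the image of the Veronese vector `ν(xᵢ)` under one
linear map, so it suffices that the eight Veronese vectors are linearly dependent. If they were
independent, the points would impose independent conditions on quadrics: a plane would contain at
most six of them, and at most five unless every quadric through all eight contains it. Each pair of
opposite facets gives a reducible quadric `q_p` through the eight points, so a plane through six
points would contain a facet from each pair, hence seven points. The three `q_p` lie in the
2-dimensional space of quadrics through the points, so `∑ g_p q_p = 0` with some `g_p ≠ 0`. Then
`q_p` vanishes on the lines where a facet plane of the pair `p + 1` meets one of the pair `p + 2`,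
which puts six vertices on a facet plane of the pair `p + 1`.
-/

local notation "ℝ⁴" => EuclideanSpace ℝ (Fin 4)
local notation "ℝ¹⁰" => EuclideanSpace ℝ (Fin 10)

namespace EightPoint

open Module Finset
open scoped RealInnerProductSpace

section LinearForms

variable {V : Type*} [NormedAddCommGroup V] [InnerProductSpace ℝ V]

theorem le_orthogonal_or_le_orthogonal_of_inner_mul_inner_eq_zero {K : Submodule ℝ V} {u v : V}
    (h : ∀ y ∈ K, ⟪u, y⟫ * ⟪v, y⟫ = 0) : K ≤ (ℝ ∙ u)ᗮ ∨ K ≤ (ℝ ∙ v)ᗮ := by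
  by_contra! ⟨hu, hv⟩
  obtain ⟨y, hy, hyu⟩ := SetLike.not_le_iff_exists.mp hu
  obtain ⟨z, hz, hzv⟩ := SetLike.not_le_iff_exists.mp hv
  rw [Submodule.mem_orthogonal_singleton_iff_inner_right] at hyu hzv
  have hyv : ⟪v, y⟫ = 0 := (mul_eq_zero.mp (h y hy)).resolve_left hyu
  have hzu : ⟪u, z⟫ = 0 := (mul_eq_zero.mp (h z hz)).resolve_right hzv
  have := h (y + z) (K.add_mem hy hz)
  rw [inner_add_right, inner_add_right, hyv, hzu, add_zero, zero_add] at this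
  exact mul_ne_zero hyu hzv this

theorem eq_zero_or_eq_zero_of_inner_mul_inner_eq_zero {u v : V} (h : ∀ y, ⟪u, y⟫ * ⟪v, y⟫ = 0) :
    u = 0 ∨ v = 0 := by
  simpa [top_le_iff, Submodule.orthogonal_eq_top_iff] using
    le_orthogonal_or_le_orthogonal_of_inner_mul_inner_eq_zero (K := ⊤) fun y _ => h y

theorem orthogonal_span_singleton_eq_of_le {u w : V} (hu : u ≠ 0) (h : (ℝ ∙ w)ᗮ ≤ (ℝ ∙ u)ᗮ) :
    (ℝ ∙ u)ᗮ = (ℝ ∙ w)ᗮ := by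
  rw [Submodule.orthogonal_le_orthogonal_iff] at h
  obtain ⟨c, rfl⟩ := Submodule.mem_span_singleton.mp (h (Submodule.mem_span_singleton_self u))
  rw [Submodule.span_singleton_smul_eq (Ne.isUnit (left_ne_zero_of_smul hu))]

/-- A linear form vanishing on the line `a = b = 0` is a combination `α a + β b`; the two
alternatives are the cases `α ≠ 0` and `α = 0`. -/
theorem orthogonal_inf_le_or_eq {u a b : V} (hu : u ≠ 0) (h : (ℝ ∙ a)ᗮ ⊓ (ℝ ∙ b)ᗮ ≤ (ℝ ∙ u)ᗮ) :
    (ℝ ∙ u)ᗮ ⊓ (ℝ ∙ b)ᗮ ≤ (ℝ ∙ a)ᗮ ∨ (ℝ ∙ u)ᗮ = (ℝ ∙ b)ᗮ := by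
  rw [Submodule.inf_orthogonal, Submodule.orthogonal_le_orthogonal_iff] at h
  obtain ⟨_, ha, _, hb, rfl⟩ := Submodule.mem_sup.mp (h (Submodule.mem_span_singleton_self u))
  obtain ⟨α, rfl⟩ := Submodule.mem_span_singleton.mp ha
  obtain ⟨β, rfl⟩ := Submodule.mem_span_singleton.mp hb
  by_cases hα : α = 0
  · subst hα
    rw [zero_smul, zero_add] at hu ⊢
    exact Or.inr (orthogonal_span_singleton_eq_of_le hu
      (Submodule.orthogonal_le (Submodule.span_singleton_smul_le ℝ β b)))
  · refine Or.inl fun y hy => ?_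
    simp only [Submodule.mem_inf, Submodule.mem_orthogonal_singleton_iff_inner_right] at hy ⊢
    rw [inner_add_left, real_inner_smul_left, real_inner_smul_left, hy.2, mul_zero,
      add_zero] at hy
    exact (mul_eq_zero.mp hy.1).resolve_left hα

end LinearForms

section Matrices

theorem exists_ne_zero_forall_inner_row_eq_zero {n : Type*} [Fintype n] [DecidableEq n]
    {y : n → n → ℝ} (h : (Matrix.of y).det = 0) :
    ∃ w : EuclideanSpace ℝ n, w ≠ 0 ∧ ∀ k, ⟪w, WithLp.toLp 2 (y k)⟫ = 0 := by
  obtain ⟨v, hv, hyv⟩ := Matrix.exists_mulVec_eq_zero_iff.mpr h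
  refine ⟨WithLp.toLp 2 v, by simpa using hv, fun k => ?_⟩
  simpa [EuclideanSpace.inner_eq_star_dotProduct, Matrix.mulVec, dotProduct_comm] using
    congrFun hyv k

theorem mulVec_apply_eq_inner {m n : Type*} [Fintype n] (A : Matrix m n ℝ) (v : n → ℝ) (j : m) :
    (A *ᵥ v) j = ⟪WithLp.toLp 2 (A j), (WithLp.toLp 2 v : EuclideanSpace ℝ n)⟫ := by
  simp [EuclideanSpace.inner_eq_star_dotProduct, Matrix.mulVec, dotProduct_comm]

theorem rank_le_finrank_of_row_eq {K m n E : Type*} [Field K] [Fintype m] [Fintype n]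
    [AddCommGroup E] [Module K E] {Z : Matrix m n K} {v : m → E} (L : E →ₗ[K] n → K)
    (hZ : ∀ i, Z i = L (v i)) :
    Z.rank ≤ (Set.range v).finrank K := by
  have : Set.range Z.row = L '' Set.range v := by
    rw [← Set.range_comp]
    exact congrArg Set.range (funext hZ)
  rw [Z.rank_eq_finrank_span_row, this, Submodule.span_image]
  have := Module.Finite.span_of_finite K (Set.finite_range v)
  exact Submodule.finrank_map_le _ _

end Matrices

theorem card_add_finrank_le_of_inner_eq_zero {ι E W : Type*} [NormedAddCommGroup E]
    [InnerProductSpace ℝ E] [FiniteDimensional ℝ E] [AddCommGroup W] [Module ℝ W] {v : ι → E}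
    (hv : LinearIndependent ℝ v) (T : Finset ι) {f : W →ₗ[ℝ] E} (hf : Function.Injective f)
    (h : ∀ i ∈ T, ∀ w, ⟪f w, v i⟫ = 0) : #T + finrank ℝ W ≤ finrank ℝ E := by
  have hspan : Submodule.span ℝ (Set.range fun i : T => v i) ≤ (LinearMap.range f)ᗮ := by
    rw [Submodule.span_le]
    rintro _ ⟨i, rfl⟩
    rw [SetLike.mem_coe, Submodule.mem_orthogonal]
    rintro _ ⟨w, rfl⟩
    exact h i i.2 w
  have hT := Submodule.finrank_mono hspan
  rw [finrank_span_eq_card (b := fun i : T => v i) (hv.comp _ Subtype.val_injective),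
    Fintype.card_coe] at hT
  have := (LinearMap.range f).finrank_add_finrank_orthogonal
  rw [LinearMap.finrank_range_of_inj hf] at this
  omega

def veroneseVec (y : ℝ⁴) : ℝ¹⁰ := WithLp.toLp 2 (veronese y.ofLp)

/-- The coefficients of the quadric `y ↦ ⟪u, y⟫ * ⟪v, y⟫` in the monomials listed by
`veronese`. -/
def mulQuadric (u : ℝ⁴) : ℝ⁴ →ₗ[ℝ] ℝ¹⁰ where
  toFun v := WithLp.toLp 2
    ![u 0 * v 0, u 0 * v 1 + u 1 * v 0, u 0 * v 2 + u 2 * v 0, u 0 * v 3 + u 3 * v 0,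
      u 1 * v 1, u 1 * v 2 + u 2 * v 1, u 1 * v 3 + u 3 * v 1,
      u 2 * v 2, u 2 * v 3 + u 3 * v 2, u 3 * v 3]
  map_add' v v' := by
    ext i
    fin_cases i <;> simp <;> ring
  map_smul' c v := by
    ext i
    fin_cases i <;> simp <;> ring

theorem inner_mulQuadric_veroneseVec (u v y : ℝ⁴) :
    ⟪mulQuadric u v, veroneseVec y⟫ = ⟪u, y⟫ * ⟪v, y⟫ := by
  simp [mulQuadric, veroneseVec, veronese, PiLp.inner_apply, Fin.sum_univ_succ]
  ring

theorem mulQuadric_injective {w : ℝ⁴} (hw : w ≠ 0) : Function.Injective (mulQuadric w) := by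
  rw [← LinearMap.ker_eq_bot, LinearMap.ker_eq_bot']
  intro s hs
  refine (eq_zero_or_eq_zero_of_inner_mul_inner_eq_zero fun y => ?_).resolve_left hw
  rw [← inner_mulQuadric_veroneseVec, hs, inner_zero_left]

section Points

variable {ι : Type*} [Fintype ι] (x : ι → ℝ⁴)

open Classical in
noncomputable def pointsIn (K : Submodule ℝ ℝ⁴) : Finset ι := {i | x i ∈ K}

variable {x}

theorem mem_pointsIn {K : Submodule ℝ ℝ⁴} {i : ι} : i ∈ pointsIn x K ↔ x i ∈ K := by
  simp [pointsIn]

theorem pointsIn_mono {K L : Submodule ℝ ℝ⁴} (h : K ≤ L) : pointsIn x K ⊆ pointsIn x L :=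
  fun _ hi => mem_pointsIn.mpr (h (mem_pointsIn.mp hi))

theorem pointsIn_inf [DecidableEq ι] (K L : Submodule ℝ ℝ⁴) :
    pointsIn x (K ⊓ L) = pointsIn x K ∩ pointsIn x L := by
  ext i
  simp [mem_pointsIn]

theorem card_pointsIn_le_six (H : LinearIndependent ℝ (veroneseVec ∘ x)) {w : ℝ⁴} (hw : w ≠ 0) :
    #(pointsIn x (ℝ ∙ w)ᗮ) ≤ 6 := by
  have := card_add_finrank_le_of_inner_eq_zero H (pointsIn x (ℝ ∙ w)ᗮ) (mulQuadric_injective hw)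
    fun i hi s => by
    rw [Function.comp_apply, inner_mulQuadric_veroneseVec,
      Submodule.mem_orthogonal_singleton_iff_inner_right.mp (mem_pointsIn.mp hi), zero_mul]
  simp only [finrank_euclideanSpace, Fintype.card_fin] at this
  omega

/-- If `q` does not vanish on the plane, the quadrics `w s + γ q` form a 5-dimensional space
vanishing at the six points. -/
theorem inner_veroneseVec_eq_zero_of_six_le (H : LinearIndependent ℝ (veroneseVec ∘ x)) {w : ℝ⁴}
    (hw : w ≠ 0) (h6 : 6 ≤ #(pointsIn x (ℝ ∙ w)ᗮ)) {q : ℝ¹⁰}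
    (hq : ∀ i, ⟪q, veroneseVec (x i)⟫ = 0) : ∀ y ∈ (ℝ ∙ w)ᗮ, ⟪q, veroneseVec y⟫ = 0 := by
  intro y hy
  rw [Submodule.mem_orthogonal_singleton_iff_inner_right] at hy
  by_contra hqy
  let f := (mulQuadric w).coprod (LinearMap.toSpanSingleton ℝ ℝ¹⁰ q)
  have hf : Function.Injective f := by
    rw [← LinearMap.ker_eq_bot, LinearMap.ker_eq_bot']
    rintro ⟨s, γ⟩ hsγ
    have hγ : γ = 0 := by
      have := congrArg (⟪·, veroneseVec y⟫) hsγ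
      simp only [f, LinearMap.coprod_apply, LinearMap.toSpanSingleton_apply, inner_add_left,
        real_inner_smul_left, inner_mulQuadric_veroneseVec, hy, zero_mul, zero_add,
        inner_zero_left] at this
      exact (mul_eq_zero.mp this).resolve_right hqy
    subst hγ
    simp only [f, LinearMap.coprod_apply, add_zero, map_zero] at hsγ
    simp [mulQuadric_injective hw (hsγ.trans (map_zero _).symm)]
  have := card_add_finrank_le_of_inner_eq_zero H (pointsIn x (ℝ ∙ w)ᗮ) hf fun i hi ⟨s, γ⟩ => by
    simp only [f, LinearMap.coprod_apply, LinearMap.toSpanSingleton_apply, inner_add_left,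
      real_inner_smul_left, Function.comp_apply, inner_mulQuadric_veroneseVec, hq, mul_zero,
      add_zero, Submodule.mem_orthogonal_singleton_iff_inner_right.mp (mem_pointsIn.mp hi),
      zero_mul]
  simp only [finrank_euclideanSpace, Fintype.card_fin, finrank_prod, finrank_self] at this
  omega

end Points

section Cube

/-- The facets of the standard cube with vertex set `Fin 8`, in the order of
`IsCombinatorialCube`; `cubeFace p 0` and `cubeFace p 1` are opposite. -/
def cubeFace : Fin 3 → Fin 2 → Finset (Fin 8) :=
  ![![{0, 1, 2, 3}, {4, 5, 6, 7}], ![{0, 3, 4, 7}, {1, 2, 5, 6}], ![{0, 2, 5, 7}, {1, 3, 4, 6}]]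

theorem exists_mem_cubeFace (p : Fin 3) (i : Fin 8) : ∃ s, i ∈ cubeFace p s := by
  revert p i; decide

theorem card_cubeFace_union_of_ne {p p' : Fin 3} (h : p ≠ p') (s s' : Fin 2) :
    #(cubeFace p s ∪ cubeFace p' s') = 6 := by
  revert p p' s s'; decide

theorem card_cubeFace_union_union (s : Fin 3 → Fin 2) :
    #(cubeFace 0 (s 0) ∪ cubeFace 1 (s 1) ∪ cubeFace 2 (s 2)) = 7 := by
  revert s; decide

theorem card_cubeFace_union_edges (p : Fin 3) (t₀ t₁ : Fin 2) :
    #(cubeFace (p + 1) 0 ∪ (cubeFace p t₀ ∩ cubeFace (p + 2) 0) ∪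
      (cubeFace p t₁ ∩ cubeFace (p + 2) 1)) = 6 := by
  revert p t₀ t₁; decide

theorem Fin.eq_add_one_or_eq_add_two_of_ne {p p' : Fin 3} (h : p' ≠ p) :
    p' = p + 1 ∨ p' = p + 2 := by
  revert p p'; decide

theorem Fin.add_two_ne_self (p : Fin 3) : p + 2 ≠ p := by
  revert p; decide

def IsFaceNormals (x : Fin 8 → ℝ⁴) (l : Fin 3 → Fin 2 → ℝ⁴) : Prop :=
  ∀ p s, l p s ≠ 0 ∧ cubeFace p s ⊆ pointsIn x (ℝ ∙ l p s)ᗮ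

def faceQuadric (l : Fin 3 → Fin 2 → ℝ⁴) (p : Fin 3) : ℝ¹⁰ := mulQuadric (l p 0) (l p 1)

variable {x : Fin 8 → ℝ⁴} {l : Fin 3 → Fin 2 → ℝ⁴}

theorem inner_faceQuadric_eq_zero {p : Fin 3} {s : Fin 2} {y : ℝ⁴} (hy : y ∈ (ℝ ∙ l p s)ᗮ) :
    ⟪faceQuadric l p, veroneseVec y⟫ = 0 := by
  rw [Submodule.mem_orthogonal_singleton_iff_inner_right] at hy
  rw [faceQuadric, inner_mulQuadric_veroneseVec]
  match s, hy with
  | 0, hy => rw [hy, zero_mul]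
  | 1, hy => rw [hy, mul_zero]

theorem exists_le_orthogonal_of_inner_faceQuadric_eq_zero {K : Submodule ℝ ℝ⁴} {p : Fin 3}
    (h : ∀ y ∈ K, ⟪faceQuadric l p, veroneseVec y⟫ = 0) : ∃ s, K ≤ (ℝ ∙ l p s)ᗮ := by
  rcases le_orthogonal_or_le_orthogonal_of_inner_mul_inner_eq_zero fun y hy => by
      rw [← inner_mulQuadric_veroneseVec]; exact h y hy with h | h
  exacts [⟨0, h⟩, ⟨1, h⟩]

namespace IsFaceNormals

theorem inner_faceQuadric_veroneseVec (hl : IsFaceNormals x l) (p : Fin 3) (i : Fin 8) :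
    ⟪faceQuadric l p, veroneseVec (x i)⟫ = 0 := by
  obtain ⟨s, hs⟩ := exists_mem_cubeFace p i
  exact inner_faceQuadric_eq_zero (mem_pointsIn.mp ((hl p s).2 hs))

/-- A plane through six vertices contains a face of each opposite pair, hence seven vertices. -/
theorem card_pointsIn_le_five (hl : IsFaceNormals x l) (H : LinearIndependent ℝ (veroneseVec ∘ x))
    {w : ℝ⁴} (hw : w ≠ 0) : #(pointsIn x (ℝ ∙ w)ᗮ) ≤ 5 := by
  by_contra! h6
  have hface : ∀ p, ∃ s, cubeFace p s ⊆ pointsIn x (ℝ ∙ w)ᗮ := by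
    intro p
    obtain ⟨s, hs⟩ := exists_le_orthogonal_of_inner_faceQuadric_eq_zero
      (inner_veroneseVec_eq_zero_of_six_le H hw h6 (hl.inner_faceQuadric_veroneseVec p))
    exact ⟨s, (hl p s).2.trans
      (pointsIn_mono (orthogonal_span_singleton_eq_of_le (hl p s).1 hs).le)⟩
  choose s hs using hface
  have h7 := card_le_card (union_subset (union_subset (hs 0) (hs 1)) (hs 2))
  rw [card_cubeFace_union_union] at h7
  have := card_pointsIn_le_six H hw
  omega

theorem not_linearIndependent (hl : IsFaceNormals x l) :
    ¬ LinearIndependent ℝ (veroneseVec ∘ x) := by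
  intro H
  obtain ⟨g, hg, p, hp⟩ : ∃ g : Fin 3 → ℝ, ∑ p, g p • faceQuadric l p = 0 ∧ ∃ p, g p ≠ 0 := by
    rw [← Fintype.not_linearIndependent_iff]
    intro hq
    have := card_add_finrank_le_of_inner_eq_zero H univ hq.fintypeLinearCombination_injective
      fun i _ g => by
      simp [Fintype.linearCombination_apply, sum_inner, real_inner_smul_left,
        hl.inner_faceQuadric_veroneseVec]
    simp at this
  -- on each line where the other two face quadrics vanish, so does `faceQuadric l p`
  have hline : ∀ s, ∃ t, pointsIn x (ℝ ∙ l p t)ᗮ ∩ pointsIn x (ℝ ∙ l (p + 2) s)ᗮ ⊆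
      pointsIn x (ℝ ∙ l (p + 1) 0)ᗮ := by
    intro s
    obtain ⟨t, ht⟩ := exists_le_orthogonal_of_inner_faceQuadric_eq_zero
        (K := (ℝ ∙ l (p + 1) 0)ᗮ ⊓ (ℝ ∙ l (p + 2) s)ᗮ) (p := p) fun y hy => by
      have := congrArg (⟪·, veroneseVec y⟫) hg
      simp only [sum_inner, real_inner_smul_left, inner_zero_left] at this
      rw [Finset.sum_eq_single p ?_ (by simp)] at this
      · exact (mul_eq_zero.mp this).resolve_left hp
      · intro p' _ hp'
        rcases Fin.eq_add_one_or_eq_add_two_of_ne hp' with rfl | rfl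
        · rw [inner_faceQuadric_eq_zero hy.1, mul_zero]
        · rw [inner_faceQuadric_eq_zero hy.2, mul_zero]
    refine ⟨t, ?_⟩
    rcases orthogonal_inf_le_or_eq (hl p t).1 ht with hle | heq
    · rw [← pointsIn_inf]
      exact pointsIn_mono hle
    · have h6 := card_le_card (union_subset ((hl p t).2.trans (pointsIn_mono heq.le))
        (hl (p + 2) s).2)
      rw [card_cubeFace_union_of_ne (Fin.add_two_ne_self p).symm] at h6
      have := hl.card_pointsIn_le_five H (hl (p + 2) s).1
      omega
  obtain ⟨t₀, h₀⟩ := hline 0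
  obtain ⟨t₁, h₁⟩ := hline 1
  have h6 := card_le_card (union_subset (union_subset (hl (p + 1) 0).2
    ((inter_subset_inter (hl p t₀).2 (hl (p + 2) 0).2).trans h₀))
    ((inter_subset_inter (hl p t₁).2 (hl (p + 2) 1).2).trans h₁))
  rw [card_cubeFace_union_edges] at h6
  have := hl.card_pointsIn_le_five H (hl (p + 1) 0).1
  omega

end IsFaceNormals

end Cube

theorem exists_isFaceNormals {P : Fin 8 → Fin 3 → ℝ} (hP : IsCombinatorialCube P) :
    ∃ l, IsFaceNormals (fun i => WithLp.toLp 2 (hom3 (P i))) l := by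
  obtain ⟨h₀, h₁, h₂, h₃, h₄, h₅⟩ := hP
  obtain ⟨n₀, hn₀, e₀⟩ := exists_ne_zero_forall_inner_row_eq_zero h₀
  obtain ⟨n₁, hn₁, e₁⟩ := exists_ne_zero_forall_inner_row_eq_zero h₁
  obtain ⟨n₂, hn₂, e₂⟩ := exists_ne_zero_forall_inner_row_eq_zero h₂
  obtain ⟨n₃, hn₃, e₃⟩ := exists_ne_zero_forall_inner_row_eq_zero h₃
  obtain ⟨n₄, hn₄, e₄⟩ := exists_ne_zero_forall_inner_row_eq_zero h₄
  obtain ⟨n₅, hn₅, e₅⟩ := exists_ne_zero_forall_inner_row_eq_zero h₅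
  refine ⟨![![n₀, n₁], ![n₂, n₃], ![n₄, n₅]], fun p s => ?_⟩
  simp only [Fin.forall_fin_succ, Fin.forall_fin_zero, cons_val_zero, cons_val_succ, and_true]
    at e₀ e₁ e₂ e₃ e₄ e₅
  fin_cases p <;> fin_cases s <;> refine ⟨‹_›, fun i hi => ?_⟩ <;>
    simp [cubeFace] at hi <;>
    rcases hi with rfl | rfl | rfl | rfl <;>
    simp only [mem_pointsIn, Submodule.mem_orthogonal_singleton_iff_inner_right] <;> tauto

end EightPoint

theorem eight_point_defeated_by_cube
    (P : Fin 8 → Fin 3 → ℝ) (hP : IsCombinatorialCube P)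
    (A₁ A₂ : Matrix (Fin 3) (Fin 4) ℝ)
    (Z : Matrix (Fin 8) (Fin 3 × Fin 3) ℝ)
    (hZ : ∀ i jk, Z i jk = A₁.mulVec (hom3 (P i)) jk.1 * A₂.mulVec (hom3 (P i)) jk.2) :
    Z.rank ≤ 7 ∧ 2 ≤ Module.finrank ℝ (LinearMap.ker Z.mulVecLin) :=
  open EightPoint in by
  obtain ⟨l, hl⟩ := exists_isFaceNormals hP
  let L : ℝ¹⁰ →ₗ[ℝ] Fin 3 × Fin 3 → ℝ := LinearMap.pi fun jk =>
    innerₗ ℝ¹⁰ (mulQuadric (WithLp.toLp 2 (A₁ jk.1)) (WithLp.toLp 2 (A₂ jk.2)))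
  have hrow : ∀ i, Z i = L (veroneseVec (WithLp.toLp 2 (hom3 (P i)))) := fun i => by
    ext jk
    simp [L, hZ, mulVec_apply_eq_inner, inner_mulQuadric_veroneseVec]
  have hrank : Z.rank ≤ 7 := by
    have := (rank_le_finrank_of_row_eq L hrow).trans_lt
      (not_le.mp (linearIndependent_iff_card_le_finrank_span.not.mp hl.not_linearIndependent))
    simp only [Fintype.card_fin] at this
    omega
  have := Z.mulVecLin.finrank_range_add_finrank_ker
  simp only [Module.finrank_fintype_fun_eq_card, Fintype.card_prod, Fintype.card_fin] at this
  exact ⟨hrank, by rw [Matrix.rank] at hrank; omega⟩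
end
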